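/- Let z : ℤ and let p : ℤ be a prime which is irregular in ℤ[i_z], i.e. there exist x y : ℤ with x^2 + z*x*y + y^2 = p or x^2 + z*x*y + y^2 = -p. Then [(∃ x y : ℤ, x^2 + z*x*y + y^2 = p) ∧ (∃ x y : ℤ, x^2 + z*x*y + y^2 = -p)] holds if and only if z = 3 or z = -3. -/

import Mathlib

/-!
The form `x² + zxy + y²` is the norm of `x + y i_z`, hence multiplicative. If `p` and `-p` are
both norms, composing the two representations (in one of two orders, according to which factor of
`(ac - bd)(bc - ad) = -p(ab + cd)` the prime `p` divides) represents `-p²` by a vector divisible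
by `p`, so `-1` is a norm. Conversely, multiplying by a representation of `-1` exchanges `p` and
`-p`. Finally `-1` is a norm exactly when `z = ±3`: for `|z| ≤ 2` the form is positive
semidefinite, and for `|z| ≥ 4` Vieta jumping descends to the impossible diagonal case `x = y`.
-/

namespace ZRing

/-- The norm of `x + y i_z` in `ℤ[i_z] = ℤ[X]/(X² - zX + 1)`. -/
def normForm (z x y : ℤ) : ℤ := x ^ 2 + z * x * y + y ^ 2

def Represents (z n : ℤ) : Prop := ∃ x y : ℤ, normForm z x y = n

theorem normForm_mul_normForm (z a b c d : ℤ) :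
    normForm z a b * normForm z c d =
      normForm z (a * c - b * d) (a * d + b * c + z * b * d) := by
  unfold normForm; ring

theorem Represents.mul {z m n : ℤ} (hm : Represents z m) (hn : Represents z n) :
    Represents z (m * n) := by
  obtain ⟨a, b, rfl⟩ := hm
  obtain ⟨c, d, rfl⟩ := hn
  exact ⟨_, _, (normForm_mul_normForm z a b c d).symm⟩

theorem represents_neg_iff_of_represents_neg_one {z n : ℤ} (h : Represents z (-1)) :
    Represents z (-n) ↔ Represents z n :=
  ⟨fun hn => by simpa using hn.mul h, fun hn => by simpa using hn.mul h⟩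

theorem Represents.of_prime_dvd {z p n X Y : ℤ} (hp : Prime p)
    (h : normForm z X Y = p ^ 2 * n) (hX : p ∣ X) : Represents z n := by
  obtain ⟨m, rfl⟩ := hX
  obtain ⟨k, rfl⟩ : p ∣ Y := hp.dvd_of_dvd_pow (n := 2)
    ⟨p * n - p * m ^ 2 - z * m * Y, by unfold normForm at h; linear_combination h⟩
  refine ⟨m, k, mul_left_cancel₀ (pow_ne_zero 2 hp.ne_zero) ?_⟩
  unfold normForm at h ⊢
  linear_combination h

theorem represents_neg_one_of_prime {z p : ℤ} (hp : Prime p) (hpos : Represents z p)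
    (hneg : Represents z (-p)) : Represents z (-1) := by
  obtain ⟨a, b, hab⟩ := hpos
  obtain ⟨c, d, hcd⟩ := hneg
  have hprod : normForm z a b * normForm z c d = p ^ 2 * -1 := by rw [hab, hcd]; ring
  have hdvd : p ∣ (a * c - b * d) * (b * c - a * d) := ⟨-(c * d + a * b), by
    unfold normForm at hab hcd; linear_combination -(c * d) * hab + a * b * hcd⟩
  rcases hp.dvd_or_dvd hdvd with h | h
  · rw [normForm_mul_normForm] at hprod
    exact .of_prime_dvd hp hprod h
  · rw [show normForm z a b = normForm z b a by unfold normForm; ring,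
      normForm_mul_normForm] at hprod
    exact .of_prime_dvd hp hprod h

theorem sq_sub_mul_add_sq_ne_neg_one {z x y : ℤ} (hz : 4 ≤ z) (hx : 0 < x) (hy : 0 < y) :
    x ^ 2 - z * x * y + y ^ 2 ≠ -1 := by
  induction h : (x + y).toNat using Nat.strong_induction_on generalizing x y with
  | _ n ih =>
  intro heq
  wlog hyx : y ≤ x generalizing x y
  · exact this hy hx (by rw [← h, add_comm]) (by linear_combination heq) (by omega)
  obtain rfl | hlt := hyx.eq_or_lt
  · nlinarith [mul_pos hx hx]
  -- Vieta jumping: `z * y - x` is the other root of `X ^ 2 - z * y * X + y ^ 2 + 1`.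
  have hprod : x * (z * y - x) = y ^ 2 + 1 := by linear_combination -heq
  have hx' : 0 < z * y - x := pos_of_mul_pos_right (hprod ▸ by positivity) hx.le
  have hlt' : z * y - x < x := by nlinarith
  exact ih _ (by omega) hx' hy rfl (by linear_combination heq)

theorem normForm_ne_neg_one_of_four_le_abs {z : ℤ} (hz : 4 ≤ |z|) (x y : ℤ) :
    normForm z x y ≠ -1 := by
  intro h
  unfold normForm at h
  have hneg : z * x * y < 0 := by nlinarith [sq_nonneg x, sq_nonneg y]
  have habs : |z| * |x| * |y| = -(z * x * y) := by
    rw [← abs_mul, ← abs_mul, abs_of_neg hneg]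
  have hx : 0 < |x| := abs_pos.mpr (by rintro rfl; nlinarith)
  have hy : 0 < |y| := abs_pos.mpr (by rintro rfl; nlinarith)
  exact sq_sub_mul_add_sq_ne_neg_one hz hx hy
    (by rw [sq_abs, sq_abs]; linear_combination h - habs)

theorem represents_neg_one_iff {z : ℤ} : Represents z (-1) ↔ z = 3 ∨ z = -3 := by
  constructor
  · rintro ⟨x, y, h⟩
    by_contra hz
    rcases le_or_gt 4 |z| with h4 | h4
    · exact normForm_ne_neg_one_of_four_le_abs h4 x y h
    · have hz2 : z ^ 2 ≤ 4 := by
        have : -2 ≤ z ∧ z ≤ 2 := by rw [abs_lt] at h4; omega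
        nlinarith
      unfold normForm at h
      nlinarith [sq_nonneg (2 * x + z * y), mul_nonneg (sub_nonneg.mpr hz2) (sq_nonneg y)]
  · rintro (rfl | rfl)
    · exact ⟨1, -1, by norm_num [normForm]⟩
    · exact ⟨1, 1, by norm_num [normForm]⟩

end ZRing

open ZRing

theorem stmt12 (z p : ℤ) (hp : Prime p)
    (hirr : (∃ x y : ℤ, x ^ 2 + z * x * y + y ^ 2 = p) ∨
            (∃ x y : ℤ, x ^ 2 + z * x * y + y ^ 2 = -p)) :
    ((∃ x y : ℤ, x ^ 2 + z * x * y + y ^ 2 = p) ∧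
     (∃ x y : ℤ, x ^ 2 + z * x * y + y ^ 2 = -p)) ↔ (z = 3 ∨ z = -3) := by
  rw [← represents_neg_one_iff]
  constructor
  · rintro ⟨hpos, hneg⟩
    exact represents_neg_one_of_prime hp hpos hneg
  · intro h
    have hswap := represents_neg_iff_of_represents_neg_one (n := p) h
    rcases hirr with hpos | hneg
    · exact ⟨hpos, hswap.2 hpos⟩
    · exact ⟨hswap.1 hneg, hneg⟩
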